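/- Let G be a finite group, H ≤ G, and 𝒥 a set of nontrivial subgroups of G. Then for every simple ℚ[G]-module V with V^H ≠ 0 there exists J ∈ 𝒥 with V^J ≠ 0, if and only if the same property holds with ℚ replaced by ℂ: for every simple ℂ[G]-module W with W^H ≠ 0 there exists J ∈ 𝒥 with W^J ≠ 0. -/

import Mathlib

open MonoidAlgebra Finsupp

/-- A module over the group algebra `k[G]` has nonzero `K`-fixed points. -/
def hasNonzeroFixedPoint (k : Type) [CommRing k] (G : Type) [Group G] (K : Subgroup G)
    (V : Type) [AddCommGroup V] [Module (MonoidAlgebra k G) V] : Prop :=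
  ∃ v : V, v ≠ 0 ∧ ∀ g ∈ K, MonoidAlgebra.of k G g • v = v

section Avg

variable {k : Type} [Field k] {G : Type} [Group G]

/-- The averaging idempotent of a finite subgroup, inside the group algebra. -/
noncomputable def avg (k : Type) [Field k] {G : Type} [Group G] (J : Subgroup G) [Fintype J] :
    MonoidAlgebra k G :=
  algebraMap k (MonoidAlgebra k G) ((Fintype.card J : k)⁻¹) *
    ∑ j : J, MonoidAlgebra.single (j : G) 1

lemma single_mul_avg (J : Subgroup G) [Fintype J] {j : G} (hj : j ∈ J) :
    MonoidAlgebra.single j (1 : k) * avg k J = avg k J := by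
  unfold avg
  rw [← mul_assoc, ← Algebra.commutes, mul_assoc, Finset.mul_sum]
  congr 1
  rw [show (∑ x : J, MonoidAlgebra.single j (1:k) * MonoidAlgebra.single (x : G) 1) =
      ∑ x : J, MonoidAlgebra.single ((j * x : G)) (1:k) by
    refine Finset.sum_congr rfl fun x _ => ?_
    rw [MonoidAlgebra.single_mul_single, one_mul]]
  exact Fintype.sum_equiv (Equiv.mulLeft (⟨j, hj⟩ : J)) _ _ (fun x => by simp)

variable {M : Type} [AddCommGroup M] [Module (MonoidAlgebra k G) M]

lemma avg_smul_fixed [CharZero k] (J : Subgroup G) [Fintype J] {u : M}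
    (hu : ∀ j ∈ J, MonoidAlgebra.of k G j • u = u) : avg k J • u = u := by
  have hs : (∑ j : J, MonoidAlgebra.single (j : G) (1:k)) • u = (Fintype.card J) • u := by
    rw [Finset.sum_smul, Finset.card_univ.symm, ← Finset.sum_const]
    refine Finset.sum_congr rfl fun j _ => ?_
    simpa [MonoidAlgebra.of_apply] using hu j j.2
  have hcast : (Fintype.card J : ℕ) • u =
      ((Fintype.card J : MonoidAlgebra k G)) • u := (Nat.cast_smul_eq_nsmul _ _ _).symm
  have hne : ((Fintype.card J : k)) ≠ 0 := Nat.cast_ne_zero.2 Fintype.card_ne_zero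
  rw [avg, mul_smul, hs, hcast, ← map_natCast (algebraMap k (MonoidAlgebra k G)),
    ← mul_smul, ← map_mul, inv_mul_cancel₀ hne, map_one, one_smul]

lemma fixed_avg_smul (J : Subgroup G) [Fintype J] (u : M) {j : G} (hj : j ∈ J) :
    MonoidAlgebra.of k G j • (avg k J • u) = avg k J • u := by
  rw [← mul_smul]
  congr 1
  simpa [MonoidAlgebra.of_apply] using single_mul_avg (k := k) J hj

end Avg

section Extract

variable {k : Type} [Field k] [CharZero k] {G : Type} [Group G] [Fintype G]
  [NeZero (Fintype.card G : k)]

lemma exists_simple_submodule_fixed (M : Type) [AddCommGroup M]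
    [Module (MonoidAlgebra k G) M] (K : Subgroup G) [Fintype K]
    (hfp : hasNonzeroFixedPoint k G K M) :
    ∃ S : Submodule (MonoidAlgebra k G) M, IsSimpleModule (MonoidAlgebra k G) S ∧
      hasNonzeroFixedPoint k G K S := by
  by_contra hcon
  push_neg at hcon
  set e : MonoidAlgebra k G := avg k K with he
  -- every simple submodule is killed by e
  have hkill : ∀ S : Submodule (MonoidAlgebra k G) M, IsSimpleModule (MonoidAlgebra k G) S →
      ∀ x ∈ S, e • x = 0 := by
    intro S hS x hx
    by_contra hne
    refine (hcon S hS) ⟨⟨e • x, S.smul_mem e hx⟩, ?_, ?_⟩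
    · simpa [Submodule.mk_eq_zero] using hne
    · intro g hg
      exact Subtype.ext (fixed_avg_smul K x hg)
  -- the submodule of elements whose whole orbit is killed by e
  set N : Submodule (MonoidAlgebra k G) M :=
    { carrier := {x | ∀ r : MonoidAlgebra k G, e • (r • x) = 0}
      add_mem' := fun ha hb r => by rw [smul_add, smul_add, ha r, hb r, add_zero]
      zero_mem' := fun r => by rw [smul_zero, smul_zero]
      smul_mem' := fun c x hx r => by rw [smul_smul r c]; exact hx (r * c) } with hN
  have htop : (⊤ : Submodule (MonoidAlgebra k G) M) ≤ N := by
    rw [← IsSemisimpleModule.sSup_simples_eq_top (MonoidAlgebra k G) M]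
    refine sSup_le fun S hS => fun x hx => fun r => ?_
    exact hkill S hS (r • x) (S.smul_mem r hx)
  obtain ⟨v, hv0, hvfix⟩ := hfp
  have h1 : e • ((1 : MonoidAlgebra k G) • v) = 0 := htop (Submodule.mem_top) 1
  rw [one_smul] at h1
  rw [avg_smul_fixed K hvfix] at h1
  exact hv0 h1

end Extract

section Phi

variable {G : Type} [Group G]

/-- Coefficient extension `ℚ[G] → ℂ[G]`. -/
noncomputable def phiQC (G : Type) [Group G] : MonoidAlgebra ℚ G →ₐ[ℚ] MonoidAlgebra ℂ G :=
  MonoidAlgebra.lift ℚ (MonoidAlgebra ℂ G) G (MonoidAlgebra.of ℂ G)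

lemma phiQC_of (g : G) : phiQC G (MonoidAlgebra.of ℚ G g) = MonoidAlgebra.of ℂ G g :=
  MonoidAlgebra.lift_of _ _

lemma phiQC_single (g : G) (q : ℚ) :
    phiQC G (MonoidAlgebra.single g q) = MonoidAlgebra.single g (q : ℂ) := by
  rw [phiQC, MonoidAlgebra.lift_single, MonoidAlgebra.of_apply, MonoidAlgebra.smul_single,
    Rat.smul_one_eq_cast]

end Phi

section Forward

lemma forward_dir (G : Type) [Group G] [Fintype G] (H : Subgroup G) (𝒥 : Set (Subgroup G))
    (hQ : ∀ (V : Type) (_ : AddCommGroup V) (_ : Module (MonoidAlgebra ℚ G) V),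
        IsSimpleModule (MonoidAlgebra ℚ G) V →
        hasNonzeroFixedPoint ℚ G H V → ∃ J ∈ 𝒥, hasNonzeroFixedPoint ℚ G J V) :
    ∀ (W : Type) (_ : AddCommGroup W) (_ : Module (MonoidAlgebra ℂ G) W),
        IsSimpleModule (MonoidAlgebra ℂ G) W →
        hasNonzeroFixedPoint ℂ G H W → ∃ J ∈ 𝒥, hasNonzeroFixedPoint ℂ G J W := by
  intro W _ _ _hsimple hfp
  haveI : NeZero ((Fintype.card G : ℚ)) := ⟨Nat.cast_ne_zero.2 Fintype.card_ne_zero⟩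
  haveI : Fintype H := Fintype.ofFinite _
  letI : Module (MonoidAlgebra ℚ G) W := Module.compHom W (phiQC G).toRingHom
  have hsmul : ∀ (x : MonoidAlgebra ℚ G) (w : W), x • w = phiQC G x • w := fun _ _ => rfl
  obtain ⟨v, hv0, hvfix⟩ := hfp
  have hfpQ : hasNonzeroFixedPoint ℚ G H W :=
    ⟨v, hv0, fun h hh => by rw [hsmul, phiQC_of]; exact hvfix h hh⟩
  obtain ⟨S, hSsimple, hSfp⟩ := exists_simple_submodule_fixed (k := ℚ) W H hfpQ
  obtain ⟨J, hJ, t, ht0, htfix⟩ := hQ S inferInstance inferInstance hSsimple hSfp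
  refine ⟨J, hJ, (t : W), fun h => ht0 (by exact_mod_cast Subtype.ext h), fun g hg => ?_⟩
  rw [← phiQC_of g, ← hsmul]
  calc MonoidAlgebra.of ℚ G g • (t : W) = ((MonoidAlgebra.of ℚ G g • t : S) : W) := rfl
    _ = (t : W) := by rw [htfix g hg]

end Forward

section Backward

variable {G : Type} [Group G]

/-- Coefficientwise application of a `ℚ`-linear functional `ℂ → ℚ`. -/
noncomputable def Fmap (G : Type) [Group G] (f : ℂ →ₗ[ℚ] ℚ) :
    MonoidAlgebra ℂ G →+ MonoidAlgebra ℚ G :=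
  { toFun := MonoidAlgebra.map f.toAddMonoidHom
    map_zero' := MonoidAlgebra.map_zero _
    map_add' := MonoidAlgebra.map_add _ }

lemma Fmap_single (f : ℂ →ₗ[ℚ] ℚ) (a : G) (c : ℂ) :
    Fmap G f (MonoidAlgebra.single a c) = MonoidAlgebra.single a (f c) := by
  show MonoidAlgebra.map f.toAddMonoidHom (MonoidAlgebra.single a c) = MonoidAlgebra.single a (f c)
  rw [MonoidAlgebra.map_single]
  rfl

lemma Fmap_phi (f : ℂ →ₗ[ℚ] ℚ) (n : MonoidAlgebra ℚ G) :
    Fmap G f (phiQC G n) = f 1 • n := by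
  induction n using MonoidAlgebra.induction with
  | zero => simp
  | single_add a b s _ _ ih =>
    rw [map_add, map_add, smul_add, ih]
    congr 1
    rw [phiQC_single, Fmap_single, MonoidAlgebra.smul_single, smul_eq_mul, mul_comm,
      show ((b : ℂ)) = b • (1 : ℂ) by rw [Rat.smul_one_eq_cast], map_smul, smul_eq_mul]

lemma Fmap_single_one_mul (f : ℂ →ₗ[ℚ] ℚ) (g : G) (y : MonoidAlgebra ℂ G) :
    Fmap G f (MonoidAlgebra.single g 1 * y) = MonoidAlgebra.single g 1 * Fmap G f y := by
  induction y using MonoidAlgebra.induction with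
  | zero => simp
  | single_add a c s _ _ ih =>
    rw [mul_add, map_add, map_add, mul_add, ih]
    congr 1
    rw [MonoidAlgebra.single_mul_single, one_mul, Fmap_single, Fmap_single,
      MonoidAlgebra.single_mul_single, one_mul]

lemma Fmap_smul (f : ℂ →ₗ[ℚ] ℚ) (c : ℂ) (y : MonoidAlgebra ℂ G) :
    Fmap G f (c • y) = Fmap G (f ∘ₗ LinearMap.mulLeft ℚ c) y := by
  induction y using MonoidAlgebra.induction with
  | zero => simp
  | single_add a d s _ _ ih =>
    rw [smul_add, map_add, map_add, ih]
    congr 1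
    rw [show ((c • MonoidAlgebra.single a d : MonoidAlgebra ℂ G)) = MonoidAlgebra.single a (c * d) by
        rw [MonoidAlgebra.smul_single, smul_eq_mul],
      Fmap_single, Fmap_single]
    simp

end Backward

lemma exists_funct : ∃ f : ℂ →ₗ[ℚ] ℚ, f 1 = 1 := by
  have li : LinearIndepOn ℚ id ({1} : Set ℂ) :=
    LinearIndepOn.singleton one_ne_zero
  let b := Module.Basis.extend li
  have h1 : (1 : ℂ) ∈ li.extend (Set.subset_univ _) :=
    li.subset_extend (Set.subset_univ _) rfl
  refine ⟨b.coord ⟨1, h1⟩, ?_⟩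
  have h2 : b.coord ⟨1, h1⟩ (b ⟨1, h1⟩) = 1 := by
    rw [Module.Basis.coord_apply, Module.Basis.repr_self, Finsupp.single_eq_same]
  rwa [Module.Basis.extend_apply_self] at h2

lemma backward_dir (G : Type) [Group G] [Fintype G] (H : Subgroup G) (𝒥 : Set (Subgroup G))
    (hC : ∀ (W : Type) (_ : AddCommGroup W) (_ : Module (MonoidAlgebra ℂ G) W),
        IsSimpleModule (MonoidAlgebra ℂ G) W →
        hasNonzeroFixedPoint ℂ G H W → ∃ J ∈ 𝒥, hasNonzeroFixedPoint ℂ G J W) :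
    ∀ (V : Type) (_ : AddCommGroup V) (_ : Module (MonoidAlgebra ℚ G) V),
        IsSimpleModule (MonoidAlgebra ℚ G) V →
        hasNonzeroFixedPoint ℚ G H V → ∃ J ∈ 𝒥, hasNonzeroFixedPoint ℚ G J V := by
  intro V _ _ _hsimple hfp
  haveI : NeZero ((Fintype.card G : ℂ)) := ⟨Nat.cast_ne_zero.2 Fintype.card_ne_zero⟩
  haveI : Fintype H := Fintype.ofFinite _
  obtain ⟨v, hv0, hvfix⟩ := hfp
  -- the "annihilator of v" left ideal
  let ψ : MonoidAlgebra ℚ G →ₗ[MonoidAlgebra ℚ G] V :=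
    { toFun := fun x => x • v
      map_add' := fun a b => add_smul a b v
      map_smul' := fun r x => by simp [smul_eq_mul, mul_smul] }
  set N : Submodule (MonoidAlgebra ℚ G) (MonoidAlgebra ℚ G) := LinearMap.ker ψ with hNdef
  have hψ : ∀ x : MonoidAlgebra ℚ G, ψ x = x • v := fun _ => rfl
  have hN1 : (1 : MonoidAlgebra ℚ G) ∉ N := by
    simp only [hNdef, LinearMap.mem_ker, hψ, one_smul]
    exact hv0
  have hNmul : ∀ (r : MonoidAlgebra ℚ G) (n : MonoidAlgebra ℚ G), n ∈ N → r * n ∈ N :=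
    fun r n hn => N.smul_mem r hn
  -- the extended ideal and the quotient module
  set Ne : Submodule (MonoidAlgebra ℂ G) (MonoidAlgebra ℂ G) :=
    Submodule.span (MonoidAlgebra ℂ G) (phiQC G '' (N : Set (MonoidAlgebra ℚ G))) with hNe
  -- membership test via coefficient functionals
  have hT : ∀ y ∈ Ne, ∀ f : ℂ →ₗ[ℚ] ℚ, Fmap G f y ∈ N := by
    intro y hy
    induction hy using Submodule.span_induction with
    | mem x hx =>
      obtain ⟨n, hn, rfl⟩ := hx
      intro f
      rw [Fmap_phi]
      exact N.smul_of_tower_mem (f 1) hn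
    | zero => intro f; rw [map_zero]; exact N.zero_mem
    | add a b _ _ iha ihb => intro f; rw [map_add]; exact N.add_mem (iha f) (ihb f)
    | smul r y _ ihy =>
      rw [smul_eq_mul]
      induction r using MonoidAlgebra.induction with
      | zero => intro f; rw [zero_mul, map_zero]; exact N.zero_mem
      | single_add a c s _ _ ihs =>
        intro f
        rw [add_mul, map_add]
        refine N.add_mem ?_ (ihs f)
        rw [show ((MonoidAlgebra.single a c : MonoidAlgebra ℂ G))
              = c • MonoidAlgebra.single a (1 : ℂ) by rw [MonoidAlgebra.smul_single, smul_eq_mul, mul_one],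
          smul_mul_assoc, Fmap_smul, Fmap_single_one_mul]
        exact hNmul _ _ (ihy _)
  have h1Ne : (1 : MonoidAlgebra ℂ G) ∉ Ne := by
    intro h1
    obtain ⟨f, hf⟩ := exists_funct
    have := hT 1 h1 f
    rw [show ((1 : MonoidAlgebra ℂ G)) = MonoidAlgebra.single 1 1 from MonoidAlgebra.one_def,
      Fmap_single, hf] at this
    exact hN1 (by rwa [MonoidAlgebra.one_def])
  -- the quotient module over ℂ[G]
  set W := MonoidAlgebra ℂ G ⧸ Ne with hW
  have hfpW : hasNonzeroFixedPoint ℂ G H W := by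
    refine ⟨Submodule.Quotient.mk 1, ?_, ?_⟩
    · intro h
      rw [Submodule.Quotient.mk_eq_zero] at h
      exact h1Ne h
    · intro g hg
      rw [show (MonoidAlgebra.of ℂ G g • (Submodule.Quotient.mk 1 : W))
            = Submodule.Quotient.mk (MonoidAlgebra.of ℂ G g * 1) from rfl]
      rw [Submodule.Quotient.eq]
      refine Submodule.subset_span ⟨MonoidAlgebra.single g 1 - 1, ?_, ?_⟩
      · have : ψ (MonoidAlgebra.single g 1 - 1) = 0 := by
          rw [map_sub, hψ, hψ, one_smul]
          rw [show (MonoidAlgebra.single g (1:ℚ)) = MonoidAlgebra.of ℚ G g from rfl]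
          rw [hvfix g hg, sub_self]
        exact this
      · rw [map_sub, map_one, phiQC_single, Rat.cast_one, mul_one]
        rfl
  obtain ⟨S, hSsimple, hSfp⟩ := exists_simple_submodule_fixed (k := ℂ) W H hfpW
  obtain ⟨J, hJ, t, ht0, htfix⟩ := hC S inferInstance inferInstance hSsimple hSfp
  haveI : Fintype J := Fintype.ofFinite _
  refine ⟨J, hJ, ?_⟩
  by_contra hcon
  -- the averaging element kills everything in V
  have hEx : ∀ x : MonoidAlgebra ℚ G, avg ℚ J * x ∈ N := by
    intro x
    have hfixed : ∀ j ∈ J, MonoidAlgebra.of ℚ G j • (avg ℚ J • (x • v)) = avg ℚ J • (x • v) :=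
      fun j hj => fixed_avg_smul J (x • v) hj
    have hzero : avg ℚ J • (x • v) = 0 := by
      by_contra hne
      exact hcon ⟨avg ℚ J • (x • v), hne, hfixed⟩
    show ψ _ = 0
    rw [hψ, mul_smul, hzero]
  have hWkill : ∀ y : MonoidAlgebra ℂ G, phiQC G (avg ℚ J) * y ∈ Ne := by
    intro y
    induction y using MonoidAlgebra.induction with
    | zero => rw [mul_zero]; exact Ne.zero_mem
    | single_add a c s _ _ ihs =>
      rw [mul_add]
      refine Ne.add_mem ?_ ihs
      rw [show ((MonoidAlgebra.single a c : MonoidAlgebra ℂ G))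
            = c • MonoidAlgebra.single a (1 : ℂ) by rw [MonoidAlgebra.smul_single, smul_eq_mul, mul_one],
        mul_smul_comm,
        show ((MonoidAlgebra.single a (1:ℂ))) = phiQC G (MonoidAlgebra.single a 1) by
          rw [phiQC_single, Rat.cast_one],
        ← map_mul]
      exact Ne.smul_of_tower_mem c (Submodule.subset_span ⟨_, hEx _, rfl⟩)
  -- transfer the fixed vector
  have hφavg : phiQC G (avg ℚ J) = avg ℂ J := by
    rw [avg, avg, map_mul, AlgHom.commutes, map_sum]
    congr 1
    · rw [IsScalarTower.algebraMap_apply ℚ ℂ (MonoidAlgebra ℂ G)]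
      norm_num
    · exact Finset.sum_congr rfl fun j _ => by rw [phiQC_single, Rat.cast_one]
  have htW : ∀ j ∈ J, MonoidAlgebra.of ℂ G j • (t : W) = (t : W) := by
    intro j hj
    calc MonoidAlgebra.of ℂ G j • (t : W) = ((MonoidAlgebra.of ℂ G j • t : S) : W) := rfl
      _ = (t : W) := by rw [htfix j hj]
  have havgt : avg ℂ J • (t : W) = (t : W) := avg_smul_fixed J htW
  obtain ⟨y, hy⟩ := Submodule.Quotient.mk_surjective Ne (t : W)
  have : (t : W) = 0 := by
    rw [← havgt, ← hy, show (avg ℂ J • (Submodule.Quotient.mk y : W))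
        = Submodule.Quotient.mk (avg ℂ J * y) from rfl, Submodule.Quotient.mk_eq_zero,
      ← hφavg]
    exact hWkill y
  exact ht0 (by exact_mod_cast this)

/-- the fixed-point condition "every simple `ℚ[G]`-module `V` with
`V^H ≠ 0` has `V^J ≠ 0` for some `J ∈ 𝒥`" holds if and only if the same condition
holds for simple `ℂ[G]`-modules. -/
theorem statement5 (G : Type) [Group G] [Finite G] (H : Subgroup G)
    (𝒥 : Set (Subgroup G)) (h𝒥 : ∀ J ∈ 𝒥, J ≠ ⊥) :
    (∀ (V : Type) (_ : AddCommGroup V) (_ : Module (MonoidAlgebra ℚ G) V),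
        IsSimpleModule (MonoidAlgebra ℚ G) V →
        hasNonzeroFixedPoint ℚ G H V → ∃ J ∈ 𝒥, hasNonzeroFixedPoint ℚ G J V) ↔
    (∀ (W : Type) (_ : AddCommGroup W) (_ : Module (MonoidAlgebra ℂ G) W),
        IsSimpleModule (MonoidAlgebra ℂ G) W →
        hasNonzeroFixedPoint ℂ G H W → ∃ J ∈ 𝒥, hasNonzeroFixedPoint ℂ G J W) := by
  haveI := Fintype.ofFinite G
  exact ⟨fun hQ => forward_dir G H 𝒥 hQ, fun hC => backward_dir G H 𝒥 hC⟩
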